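/- Let I_ν denote the modified Bessel function of the first kind, I_ν(z) = (z/2)^ν Σ_{m=0}^∞ (z²/4)^m/(m! Γ(ν+m+1)). Then for every real ν ≥ 0 and every x ≥ 0: (I_{ν+1}(x))² ≥ I_ν(x) · I_{ν+2}(x). Consequently, for every κ ≥ 1/2 and u > 0, the Mandel parameter of the Barut–Girardello coherent states, Q_M(u) = √u [ I_{2κ+1}(2√u)/I_{2κ}(2√u) − I_{2κ}(2√u)/I_{2κ-1}(2√u) ], is nonpositive: these states are sub-Poissonian. -/
import Mathlib

open Finset

/-- Rising factorial with real base. -/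
noncomputable def risef (a : ℝ) (n : ℕ) : ℝ := ∏ j ∈ Finset.range n, (a + j)

lemma risef_zero (a : ℝ) : risef a 0 = 1 := by simp [risef]

lemma risef_succ (a : ℝ) (n : ℕ) : risef a (n + 1) = risef a n * (a + n) :=
  Finset.prod_range_succ _ _

lemma risef_nonneg {a : ℝ} (ha : 0 ≤ a) (n : ℕ) : 0 ≤ risef a n :=
  Finset.prod_nonneg fun j _ => by positivity

lemma one_le_risef {a : ℝ} (ha : 1 ≤ a) (n : ℕ) : 1 ≤ risef a n := by
  induction n with
  | zero => simp [risef_zero]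
  | succ n ih =>
    rw [risef_succ]
    have h : (0:ℝ) ≤ (n:ℝ) := Nat.cast_nonneg n
    nlinarith

/-- Chu–Vandermonde identity for rising factorials. -/
lemma chu (n : ℕ) (a b : ℝ) :
    ∑ k ∈ Finset.range (n + 1), (n.choose k : ℝ) * risef a k * risef b (n - k)
      = risef (a + b) n := by
  induction n generalizing a b with
  | zero => simp [risef]
  | succ n ih =>
    rw [Finset.sum_range_succ']
    have h1 : ∀ i ∈ Finset.range (n + 1),
        ((n + 1).choose (i + 1) : ℝ) * risef a (i + 1) * risef b (n + 1 - (i + 1))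
        = (n.choose i : ℝ) * (risef a i * risef b (n - i)) * (a + i)
          + (n.choose (i + 1) : ℝ) * risef a (i + 1) * risef b (n + 1 - (i + 1)) := by
      intro i hi
      have hsub : n + 1 - (i + 1) = n - i := by omega
      rw [hsub, Nat.choose_succ_succ, Nat.cast_add, risef_succ]
      ring
    rw [Finset.sum_congr rfl h1, Finset.sum_add_distrib, add_assoc]
    have h2 : (∑ i ∈ Finset.range (n + 1),
          (n.choose (i + 1) : ℝ) * risef a (i + 1) * risef b (n + 1 - (i + 1)))
          + ((n + 1).choose 0 : ℝ) * risef a 0 * risef b (n + 1 - 0)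
        = ∑ k ∈ Finset.range (n + 1),
            (n.choose k : ℝ) * (risef a k * risef b (n - k)) * (b + (n - k : ℕ)) := by
      have e1 := Finset.sum_range_succ'
        (fun k => (n.choose k : ℝ) * risef a k * risef b (n + 1 - k)) (n + 1)
      have e2 := Finset.sum_range_succ
        (fun k => (n.choose k : ℝ) * risef a k * risef b (n + 1 - k)) (n + 1)
      simp only [Nat.choose_succ_self, Nat.cast_zero, zero_mul, add_zero,
        Nat.choose_zero_right, Nat.cast_one, one_mul, risef_zero, Nat.sub_zero] at e1 e2
      rw [show ((n+1).choose 0 : ℝ) * risef a 0 * risef b (n + 1 - 0)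
            = risef b (n+1) by simp [risef_zero]]
      rw [← e1, e2]
      refine Finset.sum_congr rfl fun k hk => ?_
      have hkn : k ≤ n := Nat.lt_succ_iff.mp (Finset.mem_range.mp hk)
      have : n + 1 - k = (n - k) + 1 := by omega
      rw [this, risef_succ]
      ring
    rw [h2, ← Finset.sum_add_distrib]
    have h3 : ∀ k ∈ Finset.range (n + 1),
        (n.choose k : ℝ) * (risef a k * risef b (n - k)) * (a + k)
          + (n.choose k : ℝ) * (risef a k * risef b (n - k)) * (b + (n - k : ℕ))
        = ((n.choose k : ℝ) * risef a k * risef b (n - k)) * (a + b + n) := by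
      intro k hk
      have hkn : k ≤ n := Nat.lt_succ_iff.mp (Finset.mem_range.mp hk)
      have : ((n - k : ℕ) : ℝ) = (n : ℝ) - k := by
        rw [Nat.cast_sub hkn]
      rw [this]; ring
    rw [Finset.sum_congr rfl h3, ← Finset.sum_mul, ih, risef_succ]

lemma risef_reflect (x : ℝ) (m : ℕ) :
    risef x m = (-1) ^ m * risef (1 - x - m) m := by
  unfold risef
  rw [← Finset.prod_range_reflect (fun j => x + j) m]
  have : ∀ j ∈ Finset.range m, x + ((m - 1 - j : ℕ) : ℝ) = -(1 - x - m + j) := by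
    intro j hj
    have hjm : j < m := Finset.mem_range.mp hj
    have : ((m - 1 - j : ℕ) : ℝ) = (m : ℝ) - 1 - j := by
      have : m - 1 - j = m - (1 + j) := by omega
      rw [this, Nat.cast_sub (by omega)]
      push_cast; ring
    rw [this]; ring
  rw [Finset.prod_congr rfl this]
  rw [show ∀ f : ℕ → ℝ, (∏ j ∈ Finset.range m, -(f j)) = ∏ j ∈ Finset.range m, (-1) * f j
    from fun f => by simp, Finset.prod_mul_distrib, Finset.prod_const]
  simp [Finset.card_range]

/-- The reflected Chu–Vandermonde identity needed for the Bessel product coefficients. -/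
lemma chu' (n : ℕ) (μ ν : ℝ) :
    ∑ k ∈ Finset.range (n + 1),
        (n.choose k : ℝ) * risef (μ + k + 1) (n - k) * risef (ν + (n - k : ℕ) + 1) k
      = risef (μ + ν + n + 1) n := by
  have h := chu n (-ν - n) (-μ - n)
  have e : ∀ k ∈ Finset.range (n + 1),
      (n.choose k : ℝ) * risef (μ + k + 1) (n - k) * risef (ν + (n - k : ℕ) + 1) k
      = (-1 : ℝ) ^ n * ((n.choose k : ℝ) * risef (-ν - n) k * risef (-μ - n) (n - k)) := by
    intro k hk
    have hkn : k ≤ n := Nat.lt_succ_iff.mp (Finset.mem_range.mp hk)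
    have hc : ((n - k : ℕ) : ℝ) = (n : ℝ) - k := Nat.cast_sub hkn
    have r1 : risef (μ + k + 1) (n - k) = (-1) ^ (n - k) * risef (-μ - n) (n - k) := by
      rw [risef_reflect (μ + k + 1) (n - k), hc]
      ring_nf
    have r2 : risef (ν + (n - k : ℕ) + 1) k = (-1) ^ k * risef (-ν - n) k := by
      rw [risef_reflect (ν + (n - k : ℕ) + 1) k, hc]
      ring_nf
    have hs : (-1 : ℝ) ^ (n - k) * (-1 : ℝ) ^ k = (-1 : ℝ) ^ n := by
      rw [← pow_add]; congr 1; omega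
    rw [r1, r2]
    linear_combination ((n.choose k : ℝ) * risef (-μ - ↑n) (n - k) * risef (-ν - ↑n) k) * hs
  rw [Finset.sum_congr rfl e, ← Finset.mul_sum, h, risef_reflect (μ + ν + (n:ℝ) + 1) n]
  ring_nf

lemma Gamma_risef {c : ℝ} (hc : 0 < c) (m : ℕ) :
    Real.Gamma (c + m) = Real.Gamma c * risef c m := by
  induction m with
  | zero => simp [risef_zero]
  | succ m ih =>
    have h : c + ((m : ℕ) + 1 : ℕ) = (c + m) + 1 := by push_cast; ring
    have hne : c + (m : ℝ) ≠ 0 := by positivity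
    rw [h, Real.Gamma_add_one hne, ih, risef_succ]
    ring

/-- Coefficient of the Cauchy product of two Bessel-type series. -/
lemma coeff_eq (μ ν : ℝ) (hμ : 0 ≤ μ) (hν : 0 ≤ ν) (n : ℕ) :
    ∑ k ∈ Finset.range (n + 1),
        1 / (k.factorial * Real.Gamma (μ + k + 1))
          * (1 / ((n - k).factorial * Real.Gamma (ν + (n - k : ℕ) + 1)))
      = risef (μ + ν + n + 1) n
        / (n.factorial * (Real.Gamma (μ + (n : ℝ) + 1) * Real.Gamma (ν + (n : ℝ) + 1))) := by
  have key : ∀ k ∈ Finset.range (n + 1),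
      1 / (k.factorial * Real.Gamma (μ + k + 1))
        * (1 / ((n - k).factorial * Real.Gamma (ν + (n - k : ℕ) + 1)))
      = ((n.choose k : ℝ) * risef (μ + k + 1) (n - k) * risef (ν + (n - k : ℕ) + 1) k)
        / (n.factorial * (Real.Gamma (μ + (n : ℝ) + 1) * Real.Gamma (ν + (n : ℝ) + 1))) := by
    intro k hk
    have hkn : k ≤ n := Nat.lt_succ_iff.mp (Finset.mem_range.mp hk)
    have hμk : (0:ℝ) < μ + k + 1 := by positivity
    have hνk : (0:ℝ) < ν + (n - k : ℕ) + 1 := by positivity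
    have g1 : Real.Gamma (μ + (n : ℝ) + 1)
        = Real.Gamma (μ + k + 1) * risef (μ + k + 1) (n - k) := by
      rw [← Gamma_risef hμk (n - k)]
      congr 1
      rw [Nat.cast_sub hkn]; ring
    have g2 : Real.Gamma (ν + (n : ℝ) + 1)
        = Real.Gamma (ν + (n - k : ℕ) + 1) * risef (ν + (n - k : ℕ) + 1) k := by
      rw [← Gamma_risef hνk k]
      congr 1
      rw [Nat.cast_sub hkn]; ring
    have gfact : (n.factorial : ℝ) = (n.choose k : ℝ) * k.factorial * (n - k).factorial := by
      rw [← Nat.choose_mul_factorial_mul_factorial hkn]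
      push_cast; ring
    have hG1 : Real.Gamma (μ + k + 1) ≠ 0 := ne_of_gt (Real.Gamma_pos_of_pos hμk)
    have hG2 : Real.Gamma (ν + (n - k : ℕ) + 1) ≠ 0 := ne_of_gt (Real.Gamma_pos_of_pos hνk)
    have hf1 : (k.factorial : ℝ) ≠ 0 := Nat.cast_ne_zero.mpr k.factorial_ne_zero
    have hf2 : ((n - k).factorial : ℝ) ≠ 0 := Nat.cast_ne_zero.mpr (n - k).factorial_ne_zero
    have hd1 : (0:ℝ) < k.factorial * Real.Gamma (μ + k + 1)
        * ((n - k).factorial * Real.Gamma (ν + (n - k : ℕ) + 1)) := by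
      have := Real.Gamma_pos_of_pos hμk
      have := Real.Gamma_pos_of_pos hνk
      have := k.factorial_pos
      have := (n - k).factorial_pos
      positivity
    have hd2 : (0:ℝ) < n.factorial
        * (Real.Gamma (μ + (n : ℝ) + 1) * Real.Gamma (ν + (n : ℝ) + 1)) := by
      have h1 : (0:ℝ) < μ + (n : ℝ) + 1 := by positivity
      have h2 : (0:ℝ) < ν + (n : ℝ) + 1 := by positivity
      have := Real.Gamma_pos_of_pos h1
      have := Real.Gamma_pos_of_pos h2
      have := n.factorial_pos
      positivity
    rw [div_mul_div_comm, one_mul, div_eq_div_iff hd1.ne' hd2.ne', g1, g2, gfact]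
    ring
  rw [Finset.sum_congr rfl key, ← Finset.sum_div, chu' n μ ν]

/-- The modified Bessel function of the first kind,
`I_ν(z) = (z/2)^ν Σ_{m≥0} (z²/4)^m/(m! Γ(ν+m+1))` (real order `ν`, real
argument, `(z/2)^ν` taken as a real power). -/
noncomputable def besselI (ν : ℝ) (z : ℝ) : ℝ :=
  (z / 2) ^ ν * ∑' m : ℕ, (z ^ 2 / 4) ^ m /
    (m.factorial * Real.Gamma (ν + m + 1))

lemma term_nonneg {ν t : ℝ} (hν : 0 ≤ ν) (ht : 0 ≤ t) (m : ℕ) :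
    0 ≤ t ^ m / (m.factorial * Real.Gamma (ν + m + 1)) := by
  have h1 : (0:ℝ) < ν + m + 1 := by positivity
  have := Real.Gamma_pos_of_pos h1
  have := m.factorial_pos
  positivity

lemma summable_aux {ν t : ℝ} (hν : 0 ≤ ν) (ht : 0 ≤ t) :
    Summable (fun m : ℕ => t ^ m / (m.factorial * Real.Gamma (ν + m + 1))) := by
  have hs : Summable (fun m : ℕ => (1 / Real.Gamma (ν + 1)) * (t ^ m / m.factorial)) :=
    (Real.summable_pow_div_factorial t).mul_left _
  refine Summable.of_nonneg_of_le (term_nonneg hν ht) (fun m => ?_) hs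
  have hg1 : (0:ℝ) < Real.Gamma (ν + 1) := Real.Gamma_pos_of_pos (by positivity)
  have hge : Real.Gamma (ν + 1) ≤ Real.Gamma (ν + m + 1) := by
    have : Real.Gamma (ν + m + 1) = Real.Gamma ((ν + 1) + m) := by ring_nf
    rw [this, Gamma_risef (by positivity : (0:ℝ) < ν + 1) m]
    nlinarith [one_le_risef (by linarith : (1:ℝ) ≤ ν + 1) m]
  have e : (1 / Real.Gamma (ν + 1)) * (t ^ m / m.factorial)
      = t ^ m / (m.factorial * Real.Gamma (ν + 1)) := by
    rw [div_mul_div_comm, one_mul, mul_comm]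
  rw [e]
  have hfm : (0:ℝ) < (m.factorial : ℝ) := by exact_mod_cast m.factorial_pos
  exact div_le_div_of_nonneg_left (by positivity) (by positivity)
    (by nlinarith)

lemma inner_eq (μ ν' : ℝ) (hμ : 0 ≤ μ) (hν : 0 ≤ ν') {t : ℝ} (ht : 0 ≤ t) (n : ℕ) :
    ∑ k ∈ Finset.range (n + 1),
        t ^ k / (k.factorial * Real.Gamma (μ + k + 1))
          * (t ^ (n - k) / ((n - k).factorial * Real.Gamma (ν' + (n - k : ℕ) + 1)))
      = t ^ n * (risef (μ + ν' + n + 1) n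
          / (n.factorial * (Real.Gamma (μ + (n : ℝ) + 1) * Real.Gamma (ν' + (n : ℝ) + 1)))) := by
  rw [← coeff_eq μ ν' hμ hν n, Finset.mul_sum]
  refine Finset.sum_congr rfl fun k hk => ?_
  have hkn : k ≤ n := Nat.lt_succ_iff.mp (Finset.mem_range.mp hk)
  have hp : t ^ k * t ^ (n - k) = t ^ n := by
    rw [← pow_add]; congr 1; omega
  linear_combination (1 / ((k.factorial : ℝ) * Real.Gamma (μ + k + 1))
    * (1 / (((n - k).factorial : ℝ) * Real.Gamma (ν' + (n - k : ℕ) + 1)))) * hp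

lemma norm_summable_aux {ν t : ℝ} (hν : 0 ≤ ν) (ht : 0 ≤ t) :
    Summable fun m : ℕ => ‖t ^ m / (m.factorial * Real.Gamma (ν + ↑m + 1))‖ := by
  have h := summable_aux hν ht
  have : (fun m : ℕ => ‖t ^ m / (m.factorial * Real.Gamma (ν + ↑m + 1))‖)
      = fun m : ℕ => t ^ m / (m.factorial * Real.Gamma (ν + ↑m + 1)) := by
    funext m; exact Real.norm_of_nonneg (term_nonneg hν ht m)
  rwa [this]

lemma prod_eq (μ ν' : ℝ) (hμ : 0 ≤ μ) (hν : 0 ≤ ν') {t : ℝ} (ht : 0 ≤ t) :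
    (∑' m : ℕ, t ^ m / (m.factorial * Real.Gamma (μ + m + 1)))
      * (∑' m : ℕ, t ^ m / (m.factorial * Real.Gamma (ν' + m + 1)))
    = ∑' n : ℕ, t ^ n * (risef (μ + ν' + n + 1) n
        / (n.factorial * (Real.Gamma (μ + (n : ℝ) + 1) * Real.Gamma (ν' + (n : ℝ) + 1)))) := by
  rw [tsum_mul_tsum_eq_tsum_sum_range_of_summable_norm
    (norm_summable_aux hμ ht) (norm_summable_aux hν ht)]
  exact tsum_congr fun n => inner_eq μ ν' hμ hν ht n

lemma prod_summable (μ ν' : ℝ) (hμ : 0 ≤ μ) (hν : 0 ≤ ν') {t : ℝ} (ht : 0 ≤ t) :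
    Summable fun n : ℕ => t ^ n * (risef (μ + ν' + n + 1) n
        / (n.factorial * (Real.Gamma (μ + (n : ℝ) + 1) * Real.Gamma (ν' + (n : ℝ) + 1)))) := by
  have h := (summable_norm_sum_mul_range_of_summable_norm
    (norm_summable_aux hμ ht) (norm_summable_aux hν ht)).of_norm
  have e : (fun n : ℕ => ∑ k ∈ Finset.range (n + 1),
      t ^ k / (k.factorial * Real.Gamma (μ + k + 1))
        * (t ^ (n - k) / ((n - k).factorial * Real.Gamma (ν' + (n - k : ℕ) + 1))))
      = fun n : ℕ => t ^ n * (risef (μ + ν' + n + 1) n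
        / (n.factorial * (Real.Gamma (μ + (n : ℝ) + 1) * Real.Gamma (ν' + (n : ℝ) + 1)))) := by
    funext n; exact inner_eq μ ν' hμ hν ht n
  rwa [e] at h

lemma S_turan {ν t : ℝ} (hν : 0 ≤ ν) (ht : 0 ≤ t) :
    (∑' m : ℕ, t ^ m / (m.factorial * Real.Gamma (ν + m + 1)))
      * (∑' m : ℕ, t ^ m / (m.factorial * Real.Gamma (ν + 2 + m + 1)))
    ≤ (∑' m : ℕ, t ^ m / (m.factorial * Real.Gamma (ν + 1 + m + 1)))
      * (∑' m : ℕ, t ^ m / (m.factorial * Real.Gamma (ν + 1 + m + 1))) := by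
  have hν1 : (0:ℝ) ≤ ν + 1 := by linarith
  have hν2 : (0:ℝ) ≤ ν + 2 := by linarith
  rw [prod_eq ν (ν + 2) hν hν2 ht, prod_eq (ν + 1) (ν + 1) hν1 hν1 ht]
  refine Summable.tsum_le_tsum (fun n => ?_) (prod_summable ν (ν + 2) hν hν2 ht)
    (prod_summable (ν + 1) (ν + 1) hν1 hν1 ht)
  set c : ℝ := ν + (n : ℝ) + 1 with hc
  have hcpos : 0 < c := by positivity
  have hR : risef (ν + (ν + 2) + n + 1) n = risef (ν + 1 + (ν + 1) + n + 1) n := by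
    congr 1; ring
  have hg1 : Real.Gamma (ν + 1 + (n : ℝ) + 1) = c * Real.Gamma c := by
    rw [show ν + 1 + (n : ℝ) + 1 = c + 1 by rw [hc]; ring, Real.Gamma_add_one hcpos.ne']
  have hg2 : Real.Gamma (ν + 2 + (n : ℝ) + 1) = (c + 1) * (c * Real.Gamma c) := by
    rw [show ν + 2 + (n : ℝ) + 1 = (c + 1) + 1 by rw [hc]; ring,
      Real.Gamma_add_one (by positivity), show c + 1 = c + 1 from rfl, ← hg1,
      show ν + 1 + (n : ℝ) + 1 = c + 1 by rw [hc]; ring]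
  rw [hR, hg1, hg2]
  have hGc : 0 < Real.Gamma c := Real.Gamma_pos_of_pos hcpos
  have hfn : (0:ℝ) < (n.factorial : ℝ) := by exact_mod_cast n.factorial_pos
  have hRn : 0 ≤ risef (ν + 1 + (ν + 1) + n + 1) n := risef_nonneg (by positivity) n
  refine mul_le_mul_of_nonneg_left ?_ (pow_nonneg ht n)
  refine div_le_div_of_nonneg_left hRn (by positivity) ?_
  nlinarith

lemma besselI_pos {ν x : ℝ} (hν : 0 ≤ ν) (hx : 0 < x) : 0 < besselI ν x := by
  unfold besselI
  have ht : (0:ℝ) ≤ x ^ 2 / 4 := by positivity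
  refine mul_pos (Real.rpow_pos_of_pos (by linarith) ν) ?_
  refine Summable.tsum_pos (summable_aux hν ht) (term_nonneg hν ht) 0 ?_
  have h1 : (0:ℝ) < ν + (0 : ℕ) + 1 := by norm_num; positivity
  have := Real.Gamma_pos_of_pos h1
  simp only [pow_zero, Nat.factorial_zero, Nat.cast_one, one_mul]
  positivity

lemma besselI_turan {ν : ℝ} (hν : 0 ≤ ν) {x : ℝ} (hx : 0 ≤ x) :
    besselI ν x * besselI (ν + 2) x ≤ (besselI (ν + 1) x) ^ 2 := by
  rcases eq_or_lt_of_le hx with h | hxpos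
  · -- x = 0
    have h0 : x = 0 := h.symm
    subst h0
    have e2 : besselI (ν + 2) 0 = 0 := by
      unfold besselI
      rw [show (0:ℝ)/2 = 0 by norm_num, Real.zero_rpow (by positivity : ν + 2 ≠ 0), zero_mul]
    have e1 : besselI (ν + 1) 0 = 0 := by
      unfold besselI
      rw [show (0:ℝ)/2 = 0 by norm_num, Real.zero_rpow (by positivity : ν + 1 ≠ 0), zero_mul]
    rw [e1, e2]
    norm_num
  · have h2 : (0:ℝ) < x / 2 := by linarith
    have ht : (0:ℝ) ≤ x ^ 2 / 4 := by positivity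
    have hp : (x / 2) ^ ν * (x / 2) ^ (ν + 2 : ℝ) = ((x / 2) ^ (ν + 1 : ℝ)) ^ 2 := by
      rw [sq, ← Real.rpow_add h2, ← Real.rpow_add h2]
      ring_nf
    unfold besselI
    calc (x / 2) ^ ν * (∑' m : ℕ, (x ^ 2 / 4) ^ m / (m.factorial * Real.Gamma (ν + m + 1)))
          * ((x / 2) ^ (ν + 2 : ℝ)
            * ∑' m : ℕ, (x ^ 2 / 4) ^ m / (m.factorial * Real.Gamma (ν + 2 + m + 1)))
        = ((x / 2) ^ ν * (x / 2) ^ (ν + 2 : ℝ))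
          * ((∑' m : ℕ, (x ^ 2 / 4) ^ m / (m.factorial * Real.Gamma (ν + m + 1)))
            * ∑' m : ℕ, (x ^ 2 / 4) ^ m / (m.factorial * Real.Gamma (ν + 2 + m + 1))) := by
          ring
      _ ≤ ((x / 2) ^ ν * (x / 2) ^ (ν + 2 : ℝ))
          * ((∑' m : ℕ, (x ^ 2 / 4) ^ m / (m.factorial * Real.Gamma (ν + 1 + m + 1)))
            * ∑' m : ℕ, (x ^ 2 / 4) ^ m / (m.factorial * Real.Gamma (ν + 1 + m + 1))) := by
          refine mul_le_mul_of_nonneg_left (S_turan hν ht) ?_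
          positivity
      _ = ((x / 2) ^ (ν + 1 : ℝ)
            * ∑' m : ℕ, (x ^ 2 / 4) ^ m / (m.factorial * Real.Gamma (ν + 1 + m + 1))) ^ 2 := by
          rw [hp]; ring

lemma part2 {ν : ℝ} (hν : 0 ≤ ν) {s : ℝ} (hs : 0 < s) :
    s * (besselI (ν + 2) (2 * s) / besselI (ν + 1) (2 * s)
      - besselI (ν + 1) (2 * s) / besselI ν (2 * s)) ≤ 0 := by
  have hx : (0:ℝ) < 2 * s := by linarith
  have hT := besselI_turan hν hx.le
  have h0 : 0 < besselI ν (2 * s) := besselI_pos hν hx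
  have h1 : 0 < besselI (ν + 1) (2 * s) := besselI_pos (by linarith) hx
  have hdiv : besselI (ν + 2) (2 * s) / besselI (ν + 1) (2 * s)
      ≤ besselI (ν + 1) (2 * s) / besselI ν (2 * s) := by
    rw [div_le_div_iff₀ h1 h0]
    nlinarith [hT]
  nlinarith [hs.le, hdiv]

/-- Turán-type inequality `(I_{ν+1}(x))² ≥ I_ν(x) I_{ν+2}(x)` for all `ν ≥ 0`
and `x ≥ 0`; consequently for every `κ ≥ 1/2` and `u > 0` the Mandel
parameter of the Barut–Girardello coherent states,
`Q_M(u) = √u [I_{2κ+1}(2√u)/I_{2κ}(2√u) − I_{2κ}(2√u)/I_{2κ-1}(2√u)]`,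
is nonpositive: these states are sub-Poissonian. -/
theorem besselI_turan_and_barut_girardello_subPoissonian :
    (∀ ν : ℝ, 0 ≤ ν → ∀ x : ℝ, 0 ≤ x →
      besselI ν x * besselI (ν + 2) x ≤ (besselI (ν + 1) x) ^ 2) ∧
    (∀ κ : ℝ, 1/2 ≤ κ → ∀ u : ℝ, 0 < u →
      Real.sqrt u *
        (besselI (2*κ + 1) (2 * Real.sqrt u) / besselI (2*κ) (2 * Real.sqrt u)
          - besselI (2*κ) (2 * Real.sqrt u) /
              besselI (2*κ - 1) (2 * Real.sqrt u)) ≤ 0) := by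
  constructor
  · exact fun ν hν x hx => besselI_turan hν hx
  · intro κ hκ u hu
    have h := part2 (ν := 2*κ - 1) (by linarith) (Real.sqrt_pos.mpr hu)
    have e1 : (2*κ - 1) + 1 = 2*κ := by ring
    have e2 : (2*κ - 1) + 2 = 2*κ + 1 := by ring
    rw [e1, e2] at h
    exact h
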